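/- Let G = (X_L, X_R ∪ U, E) be a bipartite graph as in Proposition 1 and M its augmented incidence matrix, which has n_V + r rows and n_E + r columns. Let M_{X_L} denote the submatrix of M consisting of the rows indexed by the vertices in X_L. Then the ((n_V + r) + |X_L| + (n_E + r)) × (n_E + r) matrix obtained by stacking M, −M_{X_L}, and the identity matrix I_{n_E+r} is totally unimodular. -/

import Mathlib

/-- The side of a vertex in the bipartite graph `G = (X_L, X_R ∪ U, E)`. -/
inductive BipSide : Type
  | XL  -- a vertex of `X_L`
  | XR  -- a vertex of `X_R`
  | UU  -- a vertex of `U`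
deriving DecidableEq

/-- A bipartite graph `G = (X_L, X_R ∪ U, E)` with `n_V` vertices and `n_E` edges, in which
`X_L` is partitioned into `r + 1` disjoint subsets `X_L^{C_1}, …, X_L^{C_{r+1}}` and `U` is
partitioned into `r + 1` disjoint subsets `U^{C_1}, …, U^{C_{r+1}}`, and
`E = E_XX ∪ E_1 ∪ ⋯ ∪ E_{r+1}`, where `E_XX` is a set of edges between `X_L` and `X_R` and,
for each `i`, `E_i` is a set of edges between `X_L^{C_i}` and `U^{C_i}`.
Vertices are written `v_1, …, v_{n_V}` (i.e. indexed by `Fin nV`) and edges `e_1, …, e_{n_E}`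
(indexed by `Fin nE`).  `side v` tells which of `X_L`, `X_R`, `U` the vertex `v` lies in;
`group v` tells which cell `C_i` of the partition a vertex of `X_L` (resp. of `U`) lies in;
`endL e` and `endR e` are the two endpoints of the edge `e` (in `X_L` and in `X_R ∪ U`
respectively); `eClass e = none` means `e ∈ E_XX` while `eClass e = some i` means `e ∈ E_{i+1}`. -/
structure SCCBipartite (nV nE r : ℕ) : Type where
  side : Fin nV → BipSide
  group : Fin nV → Fin (r + 1)
  endL : Fin nE → Fin nV
  endR : Fin nE → Fin nV
  eClass : Fin nE → Option (Fin (r + 1))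
  endL_XL : ∀ e, side (endL e) = BipSide.XL
  eXX_mem : ∀ e, eClass e = none → side (endR e) = BipSide.XR
  eI_mem : ∀ e i, eClass e = some i →
    side (endR e) = BipSide.UU ∧ group (endL e) = i ∧ group (endR e) = i
  edge_inj : Function.Injective fun e => (endL e, endR e)

/-- The augmented incidence matrix `M` of such a bipartite graph: an
`(n_V + r) × (n_E + r)` integer matrix with `M i j = 1` if `i ≤ n_V`, `j ≤ n_E` and `v_i` is an
endpoint of `e_j`; `M i j = -1` if `i > n_V` and `e_j ∈ E_{i - n_V}`; `M i j = 1` if `i > n_V`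
and `j = n_E + i - n_V`; and `M i j = 0` otherwise. -/
def augM {nV nE r : ℕ} (G : SCCBipartite nV nE r) : Matrix (Fin (nV + r)) (Fin (nE + r)) ℤ :=
  Matrix.of fun i j =>
    if hi : (i : ℕ) < nV then
      if hj : (j : ℕ) < nE then
        (if G.endL ⟨j, hj⟩ = ⟨i, hi⟩ ∨ G.endR ⟨j, hj⟩ = ⟨i, hi⟩ then 1 else 0)
      else 0
    else
      if hj : (j : ℕ) < nE then
        (if G.eClass ⟨j, hj⟩ = some ⟨(i : ℕ) - nV, by have := i.isLt; omega⟩ then -1 else 0)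
      else (if (i : ℕ) - nV = (j : ℕ) - nE then 1 else 0)
open Matrix

lemma signRange_iff {a : ℤ} :
    a ∈ Set.range (SignType.cast : SignType → ℤ) ↔ a = 0 ∨ a = 1 ∨ a = -1 := by
  constructor
  · rintro ⟨s, rfl⟩; cases s <;> simp
  · rintro (rfl | rfl | rfl)
    exacts [⟨0, rfl⟩, ⟨1, rfl⟩, ⟨-1, by simp⟩]

lemma det_eq_zero_of_sum_rows_eq_zero {k : ℕ} (hk : 0 < k) (T : Matrix (Fin k) (Fin k) ℤ)
    (h : ∀ j, ∑ i, T i j = 0) : T.det = 0 := by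
  have hdet : (T.map (Int.cast : ℤ → ℚ)).det = 0 := by
    rw [← Matrix.exists_vecMul_eq_zero_iff]
    refine ⟨fun _ => 1, ?_, ?_⟩
    · intro hcon
      have := congrFun hcon ⟨0, hk⟩
      simp at this
    · funext j
      have := h j
      have : ((∑ i, T i j : ℤ) : ℚ) = 0 := by rw [this]; simp
      push_cast at this
      simpa [Matrix.vecMul, dotProduct] using this
  have h2 : ((T.det : ℤ) : ℚ) = 0 := by
    have := RingHom.map_det (Int.castRingHom ℚ) T
    rw [show ((T.det : ℤ) : ℚ) = (Int.castRingHom ℚ) T.det from rfl, this]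
    simpa [RingHom.mapMatrix_apply] using hdet
  exact_mod_cast h2

lemma det_single_nonzero_col {k : ℕ} (T : Matrix (Fin (k+1)) (Fin (k+1)) ℤ)
    (i₀ j₀ : Fin (k+1)) (h : ∀ i, i ≠ i₀ → T i j₀ = 0) :
    T.det = (-1) ^ ((i₀:ℕ) + (j₀:ℕ)) * T i₀ j₀ *
      (T.submatrix i₀.succAbove j₀.succAbove).det := by
  rw [Matrix.det_succ_column T j₀]
  rw [Finset.sum_eq_single i₀]
  · intro i _ hi
    rw [h i hi]; ring
  · intro hi; exact absurd (Finset.mem_univ i₀) hi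

/-- A matrix whose every column has at most one `+1` and at most one `-1`
(and zeros elsewhere) is totally unimodular. -/
lemma posNeg_isTotallyUnimodular {X Y : Type*} [DecidableEq X]
    (pos neg : Y → Option X) :
    (Matrix.of fun (i : X) (j : Y) =>
      ((if pos j = some i then (1:ℤ) else 0) - (if neg j = some i then 1 else 0))
      ).IsTotallyUnimodular := by
  set M : Matrix X Y ℤ := Matrix.of fun (i : X) (j : Y) =>
      ((if pos j = some i then (1:ℤ) else 0) - (if neg j = some i then 1 else 0)) with hM
  intro k
  induction k with
  | zero =>
    intro f g _ _
    rw [signRange_iff]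
    right; left
    exact Matrix.det_fin_zero
  | succ k ih =>
    intro f g hf hg
    set T := M.submatrix f g with hT
    -- each column: either it has a unique nonzero entry, or its entries sum to 0
    have claim : ∀ j : Fin (k+1), (∃ i₀, T i₀ j ≠ 0 ∧ ∀ i, i ≠ i₀ → T i j = 0) ∨
        (∑ i, T i j = 0) := by
      intro j
      have hTij : ∀ i, T i j =
          ((if pos (g j) = some (f i) then (1:ℤ) else 0)
            - (if neg (g j) = some (f i) then 1 else 0)) := fun i => rfl
      rcases hp : pos (g j) with _ | p <;> rcases hn : neg (g j) with _ | q
      · right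
        apply Finset.sum_eq_zero
        intro i _
        simp [hTij, hp, hn]
      · -- only a -1 possibly
        by_cases hq : ∃ i, f i = q
        · obtain ⟨iq, hiq⟩ := hq
          left
          refine ⟨iq, ?_, ?_⟩
          · simp [hTij, hp, hn, hiq]
          · intro i hi
            have : f i ≠ q := fun hcon => hi (hf (hcon.trans hiq.symm))
            simp [hTij, hp, hn, this, Ne.symm this]
        · right
          apply Finset.sum_eq_zero
          intro i _
          have : q ≠ f i := fun hcon => hq ⟨i, hcon.symm⟩
          simp [hTij, hp, hn, this]
      · by_cases hq : ∃ i, f i = p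
        · obtain ⟨ip, hip⟩ := hq
          left
          refine ⟨ip, ?_, ?_⟩
          · simp [hTij, hp, hn, hip]
          · intro i hi
            have : f i ≠ p := fun hcon => hi (hf (hcon.trans hip.symm))
            simp [hTij, hp, hn, this, Ne.symm this]
        · right
          apply Finset.sum_eq_zero
          intro i _
          have : p ≠ f i := fun hcon => hq ⟨i, hcon.symm⟩
          simp [hTij, hp, hn, this]
      · by_cases hpq : p = q
        · right
          apply Finset.sum_eq_zero
          intro i _
          subst hpq
          simp [hTij, hp, hn]
        by_cases hip : ∃ i, f i = p <;> by_cases hiq : ∃ i, f i = q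
        · -- both present: sum is zero
          right
          obtain ⟨ip, hipe⟩ := hip
          obtain ⟨iq, hiqe⟩ := hiq
          have h1 : ∑ i, (if pos (g j) = some (f i) then (1:ℤ) else 0) = 1 := by
            rw [Finset.sum_eq_single ip]
            · simp [hp, hipe]
            · intro i _ hi
              have : f i ≠ p := fun hcon => hi (hf (hcon.trans hipe.symm))
              simp [hp, this, Ne.symm this]
            · intro h; exact absurd (Finset.mem_univ ip) h
          have h2 : ∑ i, (if neg (g j) = some (f i) then (1:ℤ) else 0) = 1 := by
            rw [Finset.sum_eq_single iq]
            · simp [hn, hiqe]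
            · intro i _ hi
              have : f i ≠ q := fun hcon => hi (hf (hcon.trans hiqe.symm))
              simp [hn, this, Ne.symm this]
            · intro h; exact absurd (Finset.mem_univ iq) h
          have : ∑ i, T i j = ∑ i, (if pos (g j) = some (f i) then (1:ℤ) else 0)
              - ∑ i, (if neg (g j) = some (f i) then (1:ℤ) else 0) := by
            rw [← Finset.sum_sub_distrib]
            exact Finset.sum_congr rfl fun i _ => hTij i
          rw [this, h1, h2]; ring
        · obtain ⟨ip, hipe⟩ := hip
          left
          refine ⟨ip, ?_, ?_⟩
          · have : q ≠ f ip := fun hcon => hiq ⟨ip, hcon.symm⟩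
            have hqp : q ≠ p := fun h => hpq h.symm
            simp [hTij, hp, hn, hipe, this, hqp]
          · intro i hi
            have h1 : f i ≠ p := fun hcon => hi (hf (hcon.trans hipe.symm))
            have h2 : q ≠ f i := fun hcon => hiq ⟨i, hcon.symm⟩
            simp [hTij, hp, hn, h1, Ne.symm h1, h2]
        · obtain ⟨iq, hiqe⟩ := hiq
          left
          refine ⟨iq, ?_, ?_⟩
          · have : p ≠ f iq := fun hcon => hip ⟨iq, hcon.symm⟩
            simp [hTij, hp, hn, hiqe, this, hpq]
          · intro i hi
            have h1 : f i ≠ q := fun hcon => hi (hf (hcon.trans hiqe.symm))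
            have h2 : p ≠ f i := fun hcon => hip ⟨i, hcon.symm⟩
            simp [hTij, hp, hn, h1, Ne.symm h1, h2]
        · right
          apply Finset.sum_eq_zero
          intro i _
          have h1 : p ≠ f i := fun hcon => hip ⟨i, hcon.symm⟩
          have h2 : q ≠ f i := fun hcon => hiq ⟨i, hcon.symm⟩
          simp [hTij, hp, hn, h1, h2]
    by_cases hex : ∃ j₀ i₀, T i₀ j₀ ≠ 0 ∧ ∀ i, i ≠ i₀ → T i j₀ = 0
    · obtain ⟨j₀, i₀, hnz, hzero⟩ := hex
      rw [show (M.submatrix f g).det = T.det from rfl,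
        det_single_nonzero_col T i₀ j₀ hzero, signRange_iff]
      have hminor : (T.submatrix i₀.succAbove j₀.succAbove).det ∈
          Set.range (SignType.cast : SignType → ℤ) := by
        rw [hT, Matrix.submatrix_submatrix]
        exact ih (f ∘ i₀.succAbove) (g ∘ j₀.succAbove)
          (hf.comp (Fin.succAbove_right_injective))
          (hg.comp (Fin.succAbove_right_injective))
      rw [signRange_iff] at hminor
      have hsign : (-1 : ℤ) ^ ((i₀:ℕ) + (j₀:ℕ)) = 1 ∨ (-1 : ℤ) ^ ((i₀:ℕ) + (j₀:ℕ)) = -1 :=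
        (Nat.even_or_odd ((i₀:ℕ) + (j₀:ℕ))).elim
          (fun h => Or.inl (Even.neg_one_pow h)) (fun h => Or.inr (Odd.neg_one_pow h))
      have hentry : T i₀ j₀ = 1 ∨ T i₀ j₀ = -1 := by
        have : T i₀ j₀ = ((if pos (g j₀) = some (f i₀) then (1:ℤ) else 0)
            - (if neg (g j₀) = some (f i₀) then 1 else 0)) := rfl
        rw [this] at hnz ⊢
        split_ifs at hnz ⊢ <;> omega
      rcases hsign with h1 | h1 <;> rcases hentry with h2 | h2 <;>
        rcases hminor with h3 | h3 | h3 <;> rw [h1, h2, h3] <;> norm_num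
    · push_neg at hex
      have hsum : ∀ j, ∑ i, T i j = 0 := by
        intro j
        rcases claim j with ⟨i₀, hnz, hzero⟩ | hs
        · exact absurd hzero (by simpa using hex j i₀ hnz)
        · exact hs
      rw [show (M.submatrix f g).det = T.det from rfl,
        det_eq_zero_of_sum_rows_eq_zero (Nat.succ_pos k) T hsum, signRange_iff]
      left; rfl

/-- If `B * C = A`, `B` has unit determinant, and `[B | A]` is totally unimodular,
then `C` is totally unimodular. -/
lemma pivot_isTotallyUnimodular {N M : ℕ} (B : Matrix (Fin N) (Fin N) ℤ)
    (C A : Matrix (Fin N) (Fin M) ℤ) (hBC : B * C = A) (hB : IsUnit B.det)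
    (hTU : (fromCols B A).IsTotallyUnimodular) : C.IsTotallyUnimodular := by
  intro k f g hf hg
  classical
  -- the matrix `D`: identity with columns in the range of `f` replaced by columns of `C`
  set D : Matrix (Fin N) (Fin N) ℤ := Matrix.of fun i j =>
    if hj : ∃ l, f l = j then C i (g hj.choose) else if i = j then 1 else 0 with hD
  set E : Matrix (Fin N) (Fin N) ℤ := Matrix.of fun i j =>
    if hj : ∃ l, f l = j then A i (g hj.choose) else B i j with hE
  have hBD : B * D = E := by
    ext i j
    rw [Matrix.mul_apply]
    by_cases hj : ∃ l, f l = j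
    · have : ∀ x, B i x * D x j = B i x * C x (g hj.choose) := by
        intro x; rw [hD]; simp only [Matrix.of_apply, dif_pos hj]
      rw [Finset.sum_congr rfl fun x _ => this x, ← Matrix.mul_apply, hBC]
      rw [hE]; simp only [Matrix.of_apply, dif_pos hj]
    · have : ∀ x, B i x * D x j = B i x * (if x = j then 1 else 0) := by
        intro x; rw [hD]; simp only [Matrix.of_apply, dif_neg hj]
      rw [Finset.sum_congr rfl fun x _ => this x]
      simp only [mul_ite, mul_one, mul_zero, Finset.sum_ite_eq', Finset.mem_univ, if_pos]
      rw [hE]; simp only [Matrix.of_apply, dif_neg hj]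
  -- `E` is a square submatrix of `[B | A]`
  have hEdet : E.det ∈ Set.range (SignType.cast : SignType → ℤ) := by
    have hsub : E = (fromCols B A).submatrix id
        (fun j => if hj : ∃ l, f l = j then Sum.inr (g hj.choose) else Sum.inl j) := by
      ext i j
      by_cases hj : ∃ l, f l = j <;>
        simp [hE, hj, Matrix.fromCols, Matrix.submatrix]
    have := (hTU.submatrix id
      (fun j => if hj : ∃ l, f l = j then Sum.inr (g hj.choose) else Sum.inl j))
      N id id Function.injective_id Function.injective_id
    rwa [Matrix.submatrix_id_id, ← hsub] at this
  have hdet : B.det * D.det = E.det := by rw [← Matrix.det_mul, hBD]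
  -- identify `D.det` with the determinant of the submatrix of `C`
  letI : DecidablePred (fun j : Fin N => ∃ l, f l = j) := fun j => inferInstance
  have hDdet : D.det = (C.submatrix f g).det := by
    let e : {j : Fin N // ∃ l, f l = j} ⊕ {j : Fin N // ¬∃ l, f l = j} ≃ Fin N :=
      Equiv.sumCompl _
    have h1 : (D.submatrix e e).det = D.det := Matrix.det_submatrix_equiv_self e D
    set X : Matrix {j : Fin N // ∃ l, f l = j} {j : Fin N // ∃ l, f l = j} ℤ :=
      Matrix.of fun a b => C a.1 (g b.2.choose) with hX
    have h2 : D.submatrix e e = Matrix.fromBlocks X 0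
        (Matrix.of fun (a : {j : Fin N // ¬∃ l, f l = j}) b => C a.1 (g b.2.choose)) 1 := by
      have he1 : ∀ x : {j : Fin N // ∃ l, f l = j}, e (Sum.inl x) = x.1 := fun x => rfl
      have he2 : ∀ x : {j : Fin N // ¬∃ l, f l = j}, e (Sum.inr x) = x.1 := fun x => rfl
      ext a b
      rcases a with a | a <;> rcases b with b | b <;>
        simp only [Matrix.submatrix_apply, he1, he2, Equiv.sumCompl_apply_inl,
          Equiv.sumCompl_apply_inr, hD, Matrix.of_apply, Matrix.fromBlocks_apply₁₁,
          Matrix.fromBlocks_apply₁₂, Matrix.fromBlocks_apply₂₁, Matrix.fromBlocks_apply₂₂]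
      · rw [dif_pos b.2]; rfl
      · rw [dif_neg b.2]
        have hne : a.1 ≠ b.1 := fun hcon => b.2 (hcon ▸ a.2)
        simp [hne]
      · rw [dif_pos b.2]
      · rw [dif_neg b.2]
        by_cases hab : a = b
        · subst hab; simp [Matrix.one_apply]
        · have hne : a.1 ≠ b.1 := fun hcon => hab (Subtype.ext hcon)
          simp [hne, Matrix.one_apply, hab]
    have h3 : (D.submatrix e e).det = X.det := by
      rw [h2, Matrix.det_fromBlocks_zero₁₂, Matrix.det_one, mul_one]
    -- X is the submatrix of C via the equivalence given by f
    let e2 : Fin k ≃ {j : Fin N // ∃ l, f l = j} :=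
      (Equiv.ofInjective f hf).trans (Equiv.subtypeEquivRight (fun j => by
        simp [Set.mem_range]))
    have h4 : X.submatrix e2 e2 = C.submatrix f g := by
      ext l l'
      have hch : (e2 l').1 = f l' := rfl
      have : g (e2 l').2.choose = g l' := by
        congr 1
        exact hf ((e2 l').2.choose_spec.trans hch)
      simp only [Matrix.submatrix_apply, hX, Matrix.of_apply, hch, this]
      exact congrArg₂ C rfl this
    have h5 : (X.submatrix e2 e2).det = X.det := Matrix.det_submatrix_equiv_self e2 X
    rw [← h1, h3, ← h5, h4]
  rw [← hDdet]
  rw [signRange_iff] at hEdet ⊢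
  rcases Int.isUnit_iff.mp hB with h | h <;> rw [h] at hdet <;> omega

lemma rowSign_isTotallyUnimodular {X Y : Type*} (A : Matrix X Y ℤ) (u : X → ℤ)
    (hu : ∀ i, u i = 1 ∨ u i = -1) (hA : A.IsTotallyUnimodular) :
    (Matrix.of fun i j => u i * A i j).IsTotallyUnimodular := by
  intro k f g hf hg
  have heq : (Matrix.of fun i j => u i * A i j).submatrix f g
      = Matrix.of fun l l' => (fun l => u (f l)) l * (A.submatrix f g) l l' := rfl
  rw [heq, Matrix.det_mul_column (fun l => u (f l)) (A.submatrix f g)]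
  have hprod : (∏ l, u (f l)) = 1 ∨ (∏ l, u (f l)) = -1 :=
    Finset.prod_induction (fun l => u (f l)) (fun z => z = 1 ∨ z = -1)
      (by rintro a b (rfl|rfl) (rfl|rfl) <;> norm_num) (Or.inl rfl) (fun x _ => hu (f x))
  have hS := hA k f g hf hg
  rw [signRange_iff] at hS ⊢
  rcases hprod with h|h <;> rcases hS with h2|h2|h2 <;> rw [h, h2] <;> norm_num

-- ### the construction
namespace SCCaux

variable {nV nE r : ℕ}

/-- row signs: `+1` on `X_L` and on augmentation rows, `-1` on `X_R ∪ U`. -/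
def sg (G : SCCBipartite nV nE r) (i : Fin (nV + r)) : ℤ :=
  if h : (i : ℕ) < nV then (if G.side ⟨i, h⟩ = BipSide.XL then 1 else -1) else 1

lemma sg_mul_self (G : SCCBipartite nV nE r) (i : Fin (nV + r)) : sg G i * sg G i = 1 := by
  unfold sg; split_ifs <;> norm_num

lemma sg_values (G : SCCBipartite nV nE r) (i : Fin (nV + r)) : sg G i = 1 ∨ sg G i = -1 := by
  unfold sg; split_ifs <;> simp

/-- the parent in the tree: a `U`-vertex of a class `< r` points to its augmentation row. -/
def cl (G : SCCBipartite nV nE r) (i : Fin (nV + r)) : Option (Fin (nV + r)) :=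
  if h : (i : ℕ) < nV then
    (if hg : G.side ⟨i, h⟩ = BipSide.UU ∧ ((G.group ⟨i, h⟩ : ℕ) < r) then
      some ⟨nV + (G.group ⟨i, h⟩ : ℕ), by omega⟩ else none)
  else none

lemma cl_big {G : SCCBipartite nV nE r} {k i : Fin (nV + r)} (h : cl G k = some i) :
    nV ≤ (i : ℕ) ∧ (k : ℕ) < nV := by
  unfold cl at h
  split_ifs at h with h1 h2
  · obtain ⟨rfl⟩ := Option.some_inj.mp h
    exact ⟨Nat.le_add_right _ _, h1⟩

lemma cl_eq_some' (G : SCCBipartite nV nE r) {k w : Fin (nV + r)} (hk : (k : ℕ) < nV)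
    (h1 : G.side ⟨(k : ℕ), hk⟩ = BipSide.UU) (h2 : ((G.group ⟨(k : ℕ), hk⟩) : ℕ) < r)
    (hw : (w : ℕ) = nV + ((G.group ⟨(k : ℕ), hk⟩) : ℕ)) :
    cl G k = some w := by
  unfold cl
  rw [dif_pos hk, dif_pos ⟨h1, h2⟩]
  exact congrArg some (Fin.ext hw.symm)

lemma cl_eq_none' (G : SCCBipartite nV nE r) {k : Fin (nV + r)} (hk : (k : ℕ) < nV)
    (h : ¬(G.side ⟨(k : ℕ), hk⟩ = BipSide.UU ∧ ((G.group ⟨(k : ℕ), hk⟩) : ℕ) < r)) :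
    cl G k = none := by
  unfold cl
  rw [dif_pos hk, dif_neg h]

lemma sg_eq_neg_one' (G : SCCBipartite nV nE r) {k : Fin (nV + r)} (hk : (k : ℕ) < nV)
    (h : ¬(G.side ⟨(k : ℕ), hk⟩ = BipSide.XL)) : sg G k = -1 := by
  unfold sg
  rw [dif_pos hk, if_neg h]

/-- the signed augmented incidence matrix -/
def S (G : SCCBipartite nV nE r) : Matrix (Fin (nV + r)) (Fin (nE + r)) ℤ :=
  Matrix.of fun i j => sg G i * augM G i j

/-- the tree-basis matrix -/
def B (G : SCCBipartite nV nE r) : Matrix (Fin (nV + r)) (Fin (nV + r)) ℤ :=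
  Matrix.of fun i j => (if j = i then (1:ℤ) else 0) - (if cl G j = some i then 1 else 0)

def pos0 (G : SCCBipartite nV nE r) (j : Fin (nE + r)) : Option (Fin (nV + r)) :=
  if hj : (j : ℕ) < nE then some ⟨(G.endL ⟨j, hj⟩ : ℕ), by have := (G.endL ⟨j, hj⟩).isLt; omega⟩
  else some ⟨nV + ((j : ℕ) - nE), by have := j.isLt; omega⟩

def neg0 (G : SCCBipartite nV nE r) (j : Fin (nE + r)) : Option (Fin (nV + r)) :=
  if hj : (j : ℕ) < nE then some ⟨(G.endR ⟨j, hj⟩ : ℕ), by have := (G.endR ⟨j, hj⟩).isLt; omega⟩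
  else none

/-- the digraph incidence matrix -/
def A0 (G : SCCBipartite nV nE r) : Matrix (Fin (nV + r)) (Fin (nE + r)) ℤ :=
  Matrix.of fun i j => (if pos0 G j = some i then (1:ℤ) else 0) - (if neg0 G j = some i then 1 else 0)

lemma detB (G : SCCBipartite nV nE r) : (B G).det = 1 := by
  have htri : (B G).BlockTriangular OrderDual.toDual := by
    intro i j hij
    have hij' : i < j := hij
    have h1 : j ≠ i := ne_of_gt hij'
    have h2 : cl G j ≠ some i := by
      intro hco
      obtain ⟨hbig, hsmall⟩ := cl_big hco
      have : (i : ℕ) < (j : ℕ) := hij'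
      omega
    simp [B, h1, h2]
  rw [Matrix.det_of_lowerTriangular (B G) htri]
  apply Finset.prod_eq_one
  intro i _
  have : cl G i ≠ some i := by
    intro hco
    obtain ⟨hbig, hsmall⟩ := cl_big hco
    omega
  simp [B, this]

lemma fromColumnsTU (G : SCCBipartite nV nE r) :
    (fromCols (B G) (A0 G)).IsTotallyUnimodular := by
  have h := posNeg_isTotallyUnimodular
    (X := Fin (nV + r)) (Y := Fin (nV + r) ⊕ Fin (nE + r))
    (Sum.elim (fun j => some j) (pos0 G)) (Sum.elim (cl G) (neg0 G))
  have heq : fromCols (B G) (A0 G) = Matrix.of fun i j =>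
      ((if Sum.elim (fun j => some j) (pos0 G) j = some i then (1:ℤ) else 0)
        - (if Sum.elim (cl G) (neg0 G) j = some i then 1 else 0)) := by
    ext i j
    rcases j with j | j
    · simp [fromCols, B]; exact if_congr Iff.rfl rfl rfl
    · simp [fromCols, A0]; congr 1 <;> exact if_congr Iff.rfl rfl rfl
  rw [heq]
  exact h

set_option maxHeartbeats 2000000 in
lemma key (G : SCCBipartite nV nE r) : B G * S G = A0 G := by
  ext i j
  rw [Matrix.mul_apply]
  have hterm : ∀ k, B G i k * S G k j
      = (if k = i then (1:ℤ) else 0) * S G k j - (if cl G k = some i then 1 else 0) * S G k j := by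
    intro k; rw [B]; simp only [Matrix.of_apply]; ring
  rw [Finset.sum_congr rfl fun k _ => hterm k, Finset.sum_sub_distrib]
  have h1 : ∑ k, (if k = i then (1:ℤ) else 0) * S G k j = S G i j := by
    simp [ite_mul, Finset.sum_ite_eq']
  rw [h1]
  by_cases hi : (i : ℕ) < nV
  · -- vertex rows: the correction sum vanishes
    have hW : ∑ k, (if cl G k = some i then (1:ℤ) else 0) * S G k j = 0 := by
      apply Finset.sum_eq_zero
      intro k _
      have : cl G k ≠ some i := by
        intro hco
        obtain ⟨hbig, _⟩ := cl_big hco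
        omega
      simp [this]
    rw [hW, sub_zero]
    by_cases hj : (j : ℕ) < nE
    · set e : Fin nE := ⟨j, hj⟩ with he
      have hSij : S G i j = sg G i * (if G.endL e = ⟨i, hi⟩ ∨ G.endR e = ⟨i, hi⟩ then 1 else 0) := by
        simp [S, augM, hi, hj]
        rfl
      have hA0 : A0 G i j = (if ((G.endL e : ℕ) = (i : ℕ)) then (1:ℤ) else 0)
          - (if ((G.endR e : ℕ) = (i : ℕ)) then 1 else 0) := by
        simp only [A0, Matrix.of_apply, pos0, neg0, dif_pos hj]
        congr 1 <;> · congr 1; simp [Option.some_inj, Fin.ext_iff, he]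
      rw [hSij, hA0]
      have hsideR : G.side (G.endR e) ≠ BipSide.XL := by
        rcases hq : G.eClass e with _ | c
        · rw [G.eXX_mem e hq]; simp
        · rw [(G.eI_mem e c hq).1]; simp
      by_cases hLe : G.endL e = ⟨(i : ℕ), hi⟩
      · have hsgn : sg G i = 1 := by
          unfold sg
          rw [dif_pos hi, if_pos (by rw [← hLe]; exact G.endL_XL e)]
        have hRe : ¬ ((G.endR e : ℕ) = (i : ℕ)) := by
          intro hco
          apply hsideR
          have : G.endR e = ⟨(i : ℕ), hi⟩ := Fin.ext hco
          rw [this, ← hLe]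
          exact G.endL_XL e
        have hLe' : (G.endL e : ℕ) = (i : ℕ) := congrArg Fin.val hLe
        rw [hsgn, if_pos (Or.inl hLe), if_pos hLe', if_neg hRe]
        norm_num
      · by_cases hRe : G.endR e = ⟨(i : ℕ), hi⟩
        · have hsgn : sg G i = -1 := by
            unfold sg
            rw [dif_pos hi, if_neg (by rw [← hRe]; exact hsideR)]
          have hLe' : ¬ ((G.endL e : ℕ) = (i : ℕ)) := fun hco => hLe (Fin.ext hco)
          rw [hsgn, if_pos (Or.inr hRe), if_neg hLe', if_pos (congrArg Fin.val hRe)]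
          norm_num
        · have hLe' : ¬ ((G.endL e : ℕ) = (i : ℕ)) := fun hco => hLe (Fin.ext hco)
          have hRe' : ¬ ((G.endR e : ℕ) = (i : ℕ)) := fun hco => hRe (Fin.ext hco)
          rw [if_neg (by tauto), if_neg hLe', if_neg hRe']
          norm_num
    · -- unit columns, vertex rows: both sides are zero
      have hSij : S G i j = 0 := by simp [S, augM, hi, hj]
      have hA0 : A0 G i j = 0 := by
        have hp : pos0 G j ≠ some i := by
          simp only [pos0, dif_neg hj]
          intro hco
          have := congrArg Fin.val (Option.some_inj.mp hco)
          simp at this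
          omega
        have hn : neg0 G j ≠ some i := by simp [neg0, dif_neg hj]
        simp [A0, hp, hn]
      rw [hSij, hA0]
  · -- augmentation rows
    have hsgn : sg G i = 1 := by unfold sg; rw [dif_neg hi]
    have hiv := i.isLt
    by_cases hj : (j : ℕ) < nE
    · obtain ⟨e, he⟩ : ∃ e : Fin nE, (⟨(j : ℕ), hj⟩ : Fin nE) = e := ⟨_, rfl⟩
      obtain ⟨k₀, hk₀v, hk₀e⟩ : ∃ k₀ : Fin (nV + r), ∃ hv : (k₀ : ℕ) < nV,
          (⟨(k₀ : ℕ), hv⟩ : Fin nV) = G.endR e :=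
        ⟨⟨(G.endR e : ℕ), by have := (G.endR e).isLt; omega⟩, (G.endR e).isLt, rfl⟩
      have hA0 : A0 G i j = 0 := by
        have hp : pos0 G j ≠ some i := by
          simp only [pos0, dif_pos hj]
          intro hco
          have h := congrArg Fin.val (Option.some_inj.mp hco)
          have := (G.endL ⟨(j : ℕ), hj⟩).isLt
          simp at h
          omega
        have hn : neg0 G j ≠ some i := by
          simp only [neg0, dif_pos hj]
          intro hco
          have h := congrArg Fin.val (Option.some_inj.mp hco)
          have := (G.endR ⟨(j : ℕ), hj⟩).isLt
          simp at h
          omega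
        simp [A0, hp, hn]
      rw [hA0, sub_eq_zero]
      have hzero : ∀ k ∈ Finset.univ, k ≠ k₀ →
          (if cl G k = some i then (1:ℤ) else 0) * S G k j = 0 := by
        intro k _ hk
        by_cases hclk : cl G k = some i
        · have hkv : (k : ℕ) < nV := (cl_big hclk).2
          have hUU : G.side ⟨(k : ℕ), hkv⟩ = BipSide.UU := by
            unfold cl at hclk
            rw [dif_pos hkv] at hclk
            split_ifs at hclk with hg
            exact hg.1
          have hSkj : S G k j = sg G k *
              (if G.endL e = ⟨(k : ℕ), hkv⟩ ∨ G.endR e = ⟨(k : ℕ), hkv⟩ then 1 else 0) := by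
            rw [← he]
            simp [S, augM, hkv, hj]
          have hnotL : G.endL e ≠ ⟨(k : ℕ), hkv⟩ := by
            intro hco
            have hxl := G.endL_XL e
            rw [hco] at hxl
            rw [hxl] at hUU
            cases hUU
          have hnotR : G.endR e ≠ ⟨(k : ℕ), hkv⟩ := by
            intro hco
            apply hk
            apply Fin.ext
            have h1 := congrArg Fin.val hco
            have h2 := congrArg Fin.val hk₀e
            simp at h1 h2
            omega
          rw [hSkj, if_neg (not_or.mpr ⟨hnotL, hnotR⟩)]
          ring
        · simp [hclk]
      rw [Finset.sum_eq_single_of_mem k₀ (Finset.mem_univ k₀) hzero]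
      have hSij : S G i j =
          (if G.eClass e = some ⟨(i : ℕ) - nV, by omega⟩ then (-1:ℤ) else 0) := by
        rw [← he]
        simp [S, augM, hi, hj, hsgn]
      rw [hSij]
      rcases hq : G.eClass e with _ | c
      · have hXR : G.side (G.endR e) = BipSide.XR := G.eXX_mem e hq
        have hclk₀ : cl G k₀ = none := by
          apply cl_eq_none' G hk₀v
          rw [hk₀e, hXR]
          simp
        rw [hclk₀]
        simp
      · have hcond : ∀ pf, (some c = some (⟨(i : ℕ) - nV, pf⟩ : Fin (r + 1)))
            ↔ (c : ℕ) = (i : ℕ) - nV := by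
          intro pf
          rw [Option.some_inj, Fin.ext_iff]
        obtain ⟨hUU, -, hgr⟩ := G.eI_mem e c hq
        have hUU' : G.side ⟨(k₀ : ℕ), hk₀v⟩ = BipSide.UU := by rw [hk₀e]; exact hUU
        have hgr' : ((G.group ⟨(k₀ : ℕ), hk₀v⟩) : ℕ) = (c : ℕ) := by rw [hk₀e, hgr]
        by_cases hcr : (c : ℕ) < r
        · have hclk₀ : cl G k₀ = some ⟨nV + (c : ℕ), by omega⟩ :=
            cl_eq_some' G hk₀v hUU' (by omega) (by simp [hgr'])
          have hcond2 : ∀ pf, (some (⟨nV + (c : ℕ), pf⟩ : Fin (nV + r)) = some i)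
              ↔ nV + (c : ℕ) = (i : ℕ) := by
            intro pf
            rw [Option.some_inj, Fin.ext_iff]
          have hsgk₀ : sg G k₀ = -1 := by
            apply sg_eq_neg_one' G hk₀v
            rw [hUU']
            simp
          have hSk₀ : S G k₀ j = -1 := by
            have haug : augM G k₀ j = 1 := by
              simp only [augM, Matrix.of_apply, dif_pos hk₀v, dif_pos hj]
              rw [if_pos (Or.inr (by rw [he, hk₀e]))]
            show sg G k₀ * augM G k₀ j = -1
            rw [haug, hsgk₀]
            norm_num
          rw [hclk₀, hSk₀]
          by_cases h : (c : ℕ) = (i : ℕ) - nV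
          · rw [if_pos ((hcond _).mpr h), if_pos ((hcond2 _).mpr (by omega))]
            norm_num
          · rw [if_neg (by rw [hcond]; omega), if_neg (by rw [hcond2]; omega)]
            norm_num
        · have hclk₀ : cl G k₀ = none := by
            apply cl_eq_none' G hk₀v
            rw [hUU', hgr']
            simp [hcr]
          rw [hclk₀, if_neg (by rw [hcond]; omega)]
          simp
    · -- unit columns, augmentation rows
      have hW : ∑ k, (if cl G k = some i then (1:ℤ) else 0) * S G k j = 0 := by
        apply Finset.sum_eq_zero
        intro k _
        by_cases hclk : cl G k = some i
        · have hkv : (k : ℕ) < nV := (cl_big hclk).2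
          have : S G k j = 0 := by simp [S, augM, hkv, hj]
          rw [this]; ring
        · simp [hclk]
      rw [hW, sub_zero]
      have hSij : S G i j = (if (i : ℕ) - nV = (j : ℕ) - nE then (1:ℤ) else 0) := by
        simp [S, augM, hi, hj, hsgn]
      have hjv := j.isLt
      have hA0 : A0 G i j = (if (i : ℕ) - nV = (j : ℕ) - nE then (1:ℤ) else 0) := by
        have hcond3 : ∀ pf, ((some (⟨nV + ((j : ℕ) - nE), pf⟩ : Fin (nV + r)) = some i))
            ↔ nV + ((j : ℕ) - nE) = (i : ℕ) := fun pf => by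
          rw [Option.some_inj, Fin.ext_iff]
        simp only [A0, Matrix.of_apply, pos0, neg0, dif_neg hj]
        rw [show (if (none : Option (Fin (nV + r))) = some i then (1:ℤ) else 0) = 0 from by simp,
          sub_zero]
        by_cases h : (i : ℕ) - nV = (j : ℕ) - nE
        · rw [if_pos ((hcond3 _).mpr (by omega)), if_pos h]
        · rw [if_neg (by rw [hcond3]; omega), if_neg h]
      rw [hSij, hA0]

end SCCaux

/-- Stacking `M`, `-M_{X_L}` (the rows of `M` indexed by the vertices of `X_L`, negated), and
the identity matrix `I_{n_E + r}` yields a totally unimodular matrix. -/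
theorem stacked_augM_isTotallyUnimodular {nV nE r : ℕ} (G : SCCBipartite nV nE r) :
    (Matrix.fromRows (augM G)
      (Matrix.fromRows
        (-(augM G).submatrix
            (fun v : {v : Fin nV // G.side v = BipSide.XL} => Fin.castAdd r v.1) id)
        (1 : Matrix (Fin (nE + r)) (Fin (nE + r)) ℤ))).IsTotallyUnimodular := by
  have hS : (SCCaux.S G).IsTotallyUnimodular :=
    pivot_isTotallyUnimodular (SCCaux.B G) (SCCaux.S G) (SCCaux.A0 G) (SCCaux.key G)
      (by rw [SCCaux.detB G]; exact isUnit_one) (SCCaux.fromColumnsTU G)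
  have hfr : (fromRows (SCCaux.S G)
      (1 : Matrix (Fin (nE + r)) (Fin (nE + r)) ℤ)).IsTotallyUnimodular :=
    (Matrix.fromRows_one_isTotallyUnimodular_iff _).mpr hS
  set ρ : (Fin (nV + r) ⊕ ({v : Fin nV // G.side v = BipSide.XL} ⊕ Fin (nE + r))) →
      (Fin (nV + r) ⊕ Fin (nE + r)) :=
    Sum.elim Sum.inl (Sum.elim (fun v => Sum.inl (Fin.castAdd r v.1)) Sum.inr) with hρ
  set u : (Fin (nV + r) ⊕ ({v : Fin nV // G.side v = BipSide.XL} ⊕ Fin (nE + r))) → ℤ :=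
    Sum.elim (SCCaux.sg G) (Sum.elim (fun _ => -1) (fun _ => 1)) with hu
  have hu1 : ∀ p, u p = 1 ∨ u p = -1 := by
    rintro (p | p | p)
    · exact SCCaux.sg_values G p
    · right; rfl
    · left; rfl
  have hTU2 := rowSign_isTotallyUnimodular
    ((fromRows (SCCaux.S G) 1).submatrix ρ id) u hu1 (hfr.submatrix ρ id)
  have heq : (Matrix.fromRows (augM G)
      (Matrix.fromRows
        (-(augM G).submatrix
            (fun v : {v : Fin nV // G.side v = BipSide.XL} => Fin.castAdd r v.1) id)
        (1 : Matrix (Fin (nE + r)) (Fin (nE + r)) ℤ)))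
      = Matrix.of fun p q => u p * ((fromRows (SCCaux.S G) 1).submatrix ρ id) p q := by
    ext p q
    rcases p with p | p | p
    · show augM G p q = SCCaux.sg G p * ((SCCaux.S G) p q)
      show augM G p q = SCCaux.sg G p * (SCCaux.sg G p * augM G p q)
      rw [← mul_assoc, SCCaux.sg_mul_self, one_mul]
    · have hv : ((Fin.castAdd r p.1 : Fin (nV + r)) : ℕ) < nV := p.1.isLt
      show -((augM G) (Fin.castAdd r p.1) q) = -1 * (SCCaux.S G (Fin.castAdd r p.1) q)
      have hsg : SCCaux.sg G (Fin.castAdd r p.1) = 1 := by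
        have hside : G.side ⟨((Fin.castAdd r p.1 : Fin (nV + r)) : ℕ), hv⟩ = BipSide.XL := p.2
        unfold SCCaux.sg
        rw [dif_pos hv, if_pos hside]
      show -((augM G) (Fin.castAdd r p.1) q)
        = -1 * (SCCaux.sg G (Fin.castAdd r p.1) * augM G (Fin.castAdd r p.1) q)
      rw [hsg]; ring
    · show (1 : Matrix (Fin (nE + r)) (Fin (nE + r)) ℤ) p q = 1 * _
      rw [one_mul]
      rfl
  rw [heq]
  exact hTU2
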